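/- arXiv:2008.13428 — 4 statements merged into one kernel-verified Lean document; each statement's English description precedes it below -/
import Mathlib

section
/- Let L > 0 and let β : ℝ → ℝ be continuous with β(s) > 0 for all s and reflection-symmetric about L/2, i.e. β(L/2 + s) = β(L/2 − s) for all s. Define the phase advance φ(s) = ∫_0^s (1/β(u)) du, the tune Q = φ(L)/(2π), and assume sin(πQ) ≠ 0. Let M and N be even positive integers and let monitor positions p : Fin M → ℝ and corrector positions q : Fin N → ℝ (1-indexed) be reflection-symmetric about L/2, i.e. p_{M+1−k} = L − p_k for all k and q_{N+1−k} = L − q_k for all k. Define the orbit response matrix R ∈ ℝ^{M×N} entrywise by R_{m,n} = √(β(p_m)·β(q_n)) / (2·sin(πQ)) · cos(πQ − |φ(p_m) − φ(q_n)|). Then R is centrosymmetric, i.e. R·J_N = J_M·R, so R ∈ CS(M/2, N/2). -/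
open Matrix Real

/-- The exchange matrix `J_n` with ones on the anti-diagonal and zeros elsewhere. -/
def exchMatrix (n : ℕ) : Matrix (Fin n) (Fin n) ℝ :=
  Matrix.of fun i j => if (i : ℕ) + (j : ℕ) = n - 1 then 1 else 0

lemma mul_exch {M N : ℕ} (R : Matrix (Fin M) (Fin N) ℝ) (m : Fin M) (n : Fin N) :
    (R * exchMatrix N) m n = R m n.rev := by
  rw [Matrix.mul_apply]
  rw [Finset.sum_eq_single n.rev]
  · simp [exchMatrix, Fin.rev]
    intro h
    exfalso
    apply h
    omega
  · intro k _ hk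
    have : (k : ℕ) + (n : ℕ) ≠ N - 1 := by
      intro h
      apply hk
      have : (k : ℕ) = N - 1 - n := by omega
      simp [Fin.rev, Fin.ext_iff, this]
      omega
    simp [exchMatrix, this]
  · simp

lemma exch_mul {M N : ℕ} (R : Matrix (Fin M) (Fin N) ℝ) (m : Fin M) (n : Fin N) :
    (exchMatrix M * R) m n = R m.rev n := by
  rw [Matrix.mul_apply]
  rw [Finset.sum_eq_single m.rev]
  · simp [exchMatrix, Fin.rev]
    intro h
    exfalso
    apply h
    omega
  · intro k _ hk
    have : (m : ℕ) + (k : ℕ) ≠ M - 1 := by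
      intro h
      apply hk
      have : (k : ℕ) = M - 1 - m := by omega
      simp [Fin.rev, Fin.ext_iff, this]
      omega
    simp [exchMatrix, this]
  · simp

/-- **Centrosymmetric orbit response matrix.** If the betatron function `β` is
reflection-symmetric about `L/2` and the monitor positions `p` and corrector positions `q`
are reflection-symmetric about `L/2` (with `Fin.rev` playing the role of the 1-indexed map
`k ↦ M+1−k`), then the orbit response matrix `R` is centrosymmetric: `R·J_N = J_M·R`. -/
theorem orbitResponse_centrosymmetric
    (L : ℝ) (hL : 0 < L)
    (β : ℝ → ℝ) (hβcont : Continuous β) (hβpos : ∀ s, 0 < β s)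
    (hβrefl : ∀ s, β (L / 2 + s) = β (L / 2 - s))
    (φ : ℝ → ℝ) (hφ : ∀ s, φ s = ∫ u in (0:ℝ)..s, (β u)⁻¹)
    (Q : ℝ) (hQ : Q = φ L / (2 * π))
    (hsin : Real.sin (π * Q) ≠ 0)
    (M N : ℕ) (hM : 0 < M) (hN : 0 < N) (hMeven : Even M) (hNeven : Even N)
    (p : Fin M → ℝ) (q : Fin N → ℝ)
    (hp : ∀ k : Fin M, p k.rev = L - p k)
    (hq : ∀ k : Fin N, q k.rev = L - q k)
    (R : Matrix (Fin M) (Fin N) ℝ)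
    (hR : ∀ (m : Fin M) (n : Fin N),
      R m n = Real.sqrt (β (p m) * β (q n)) / (2 * Real.sin (π * Q)) *
        Real.cos (π * Q - |φ (p m) - φ (q n)|)) :
    R * exchMatrix N = exchMatrix M * R := by
  have hβsym : ∀ s, β (L - s) = β s := by
    intro s
    have h1 : L - s = L / 2 + (L / 2 - s) := by ring
    have h2 : L / 2 - (L / 2 - s) = s := by ring
    rw [h1, hβrefl, h2]
  have hfcont : Continuous fun u => (β u)⁻¹ :=
    hβcont.inv₀ (fun u => (hβpos u).ne')
  have hφsym : ∀ s, φ (L - s) = φ L - φ s := by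
    intro s
    have hint : ∀ a b : ℝ, IntervalIntegrable (fun u => (β u)⁻¹) MeasureTheory.volume a b :=
      fun a b => hfcont.intervalIntegrable a b
    have hadd : φ s + (∫ u in s..L, (β u)⁻¹) = φ L := by
      rw [hφ s, hφ L]
      exact intervalIntegral.integral_add_adjacent_intervals (hint 0 s) (hint s L)
    have hsub : (∫ u in s..L, (β u)⁻¹) = φ (L - s) := by
      rw [hφ]
      have := intervalIntegral.integral_comp_sub_left (a := s) (b := L)
        (fun u => (β u)⁻¹) L
      simp only [sub_self] at this
      rw [← this]
      apply intervalIntegral.integral_congr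
      intro x _
      simp [hβsym]
    linarith
  ext m n
  rw [mul_exch, exch_mul, hR, hR, hp, hq, hβsym, hβsym, hφsym, hφsym]
  rw [mul_comm (β (p m)),
    show φ (p m) - (φ L - φ (q n)) = -(φ L - φ (p m) - φ (q n)) by ring, abs_neg]
end

section
/- Let S be an even positive integer and N_B, N_C even positive integers. Suppose R ∈ ℝ^{(S·N_B)×(S·N_C)} is simultaneously block-circulant of order S with N_B×N_C blocks, R ∈ BC(S,N_B,N_C) with blocks r_0, …, r_{S−1} ∈ ℝ^{N_B×N_C} (so that R = Σ_{k=0}^{S−1} Ω_S^k ⊗ r_k), and centrosymmetric, R·J_{S·N_C} = J_{S·N_B}·R. Then the blocks r_0 and r_{S/2} are themselves centrosymmetric: r_0·J_{N_C} = J_{N_B}·r_0 and r_{S/2}·J_{N_C} = J_{N_B}·r_{S/2}. -/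
open Matrix Kronecker Fin.NatCast

/-- The cyclic shift permutation matrix `Ω_n` with `(Ω_n)_{i,j} = 1` iff `j ≡ i+1 (mod n)`. -/
def cyclicShift (n : ℕ) : Matrix (Fin n) (Fin n) ℝ :=
  Matrix.of fun i j => if (j : ℕ) = ((i : ℕ) + 1) % n then 1 else 0

/-!
Entry `((i, a), (j, b))` of `Σ_k Ω_S^k ⊗ r_k` is `r_{j-i} a b`, and `J_S ⊗ J_N` reverses both the
block index and the inner index. Since `rev j - rev i = i - j` in `ℤ/S`, centrosymmetry of the
whole matrix says `r_k J = J r_{-k}` for every `k`. The blocks with `k = -k`, namely `r_0` and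
`r_{S/2}` for even `S`, are therefore centrosymmetric.
-/

lemma Matrix.permMatrix_pow {n R : Type*} [DecidableEq n] [Fintype n] [Semiring R]
    (σ : Equiv.Perm n) (k : ℕ) : (σ ^ k).permMatrix R = σ.permMatrix R ^ k := by
  induction k with
  | zero => simp
  | succ k ih => rw [pow_succ, permMatrix_mul, ih, pow_succ']

lemma Matrix.kronecker_permMatrix {m n R : Type*} [DecidableEq m] [DecidableEq n]
    [MulZeroOneClass R] (σ : Equiv.Perm m) (τ : Equiv.Perm n) :
    σ.permMatrix R ⊗ₖ τ.permMatrix R = Equiv.Perm.permMatrix R (σ.prodCongr τ) := by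
  ext ⟨a, b⟩ ⟨c, d⟩
  by_cases σ a = c <;> simp [*]

lemma finRotate_pow_apply {n : ℕ} [NeZero n] (k : ℕ) (i : Fin n) :
    (finRotate n ^ k) i = i + k := by
  induction k with
  | zero => simp
  | succ k ih =>
    rw [pow_succ', Equiv.Perm.mul_apply, ih, finRotate_apply, Nat.cast_succ, add_assoc]

lemma Fin.rev_sub_rev {n : ℕ} (i j : Fin n) : rev j - rev i = i - j := by
  cases n with
  | zero => exact i.elim0
  | succ n => rw [← last_sub, ← last_sub]; abel

lemma Fin.neg_natCast_half {n : ℕ} [NeZero n] (hn : Even n) :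
    -((n / 2 : ℕ) : Fin n) = (n / 2 : ℕ) := by
  rw [neg_eq_iff_add_eq_zero, ← Nat.cast_add, ← two_mul, Nat.two_mul_div_two_of_even hn,
    natCast_self]

lemma cyclicShift_eq_permMatrix (n : ℕ) : cyclicShift n = (finRotate n).permMatrix ℝ := by
  ext i j
  have := i.neZero
  simp [cyclicShift, finRotate_apply, Fin.ext_iff, Fin.val_add, eq_comm]

lemma cyclicShift_pow_apply {n : ℕ} [NeZero n] (k : ℕ) (i j : Fin n) :
    (cyclicShift n ^ k) i j = if i + k = j then 1 else 0 := by
  rw [cyclicShift_eq_permMatrix, ← permMatrix_pow]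
  simp [finRotate_pow_apply]

lemma exchMatrix_eq_permMatrix (n : ℕ) :
    exchMatrix n = (Fin.revPerm : Equiv.Perm (Fin n)).permMatrix ℝ := by
  ext i j
  simp only [exchMatrix, of_apply, PEquiv.toMatrix_apply, Equiv.toPEquiv_apply, Option.mem_def,
    Option.some_inj, Fin.revPerm_apply, Fin.ext_iff, Fin.val_rev]
  exact if_congr (by omega) rfl rfl

lemma mul_exchMatrix {α : Type*} [Fintype α] {n : ℕ} (M : Matrix α (Fin n) ℝ) :
    M * exchMatrix n = M.submatrix id Fin.rev := by
  rw [exchMatrix_eq_permMatrix, PEquiv.mul_toMatrix_toPEquiv, Fin.revPerm_symm]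
  rfl

lemma exchMatrix_mul {α : Type*} [Fintype α] {n : ℕ} (M : Matrix (Fin n) α ℝ) :
    exchMatrix n * M = M.submatrix Fin.rev id := by
  rw [exchMatrix_eq_permMatrix, PEquiv.toMatrix_toPEquiv_mul]
  rfl

lemma mul_kronecker_exchMatrix {α : Type*} [Fintype α] {m n : ℕ}
    (M : Matrix α (Fin m × Fin n) ℝ) :
    M * (exchMatrix m ⊗ₖ exchMatrix n) = M.submatrix id (Prod.map Fin.rev Fin.rev) := by
  rw [exchMatrix_eq_permMatrix, exchMatrix_eq_permMatrix, kronecker_permMatrix,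
    PEquiv.mul_toMatrix_toPEquiv, Equiv.prodCongr_symm, Fin.revPerm_symm, Fin.revPerm_symm]
  rfl

lemma kronecker_exchMatrix_mul {α : Type*} [Fintype α] {m n : ℕ}
    (M : Matrix (Fin m × Fin n) α ℝ) :
    (exchMatrix m ⊗ₖ exchMatrix n) * M = M.submatrix (Prod.map Fin.rev Fin.rev) id := by
  rw [exchMatrix_eq_permMatrix, exchMatrix_eq_permMatrix, kronecker_permMatrix,
    PEquiv.toMatrix_toPEquiv_mul]
  rfl

def blockCirculant {n p m : ℕ} (r : Fin n → Matrix (Fin p) (Fin m) ℝ) :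
    Matrix (Fin n × Fin p) (Fin n × Fin m) ℝ :=
  ∑ k : Fin n, (cyclicShift n ^ (k : ℕ)) ⊗ₖ r k

lemma blockCirculant_apply {n p m : ℕ} (r : Fin n → Matrix (Fin p) (Fin m) ℝ)
    (i j : Fin n) (a : Fin p) (b : Fin m) :
    blockCirculant r (i, a) (j, b) = r (j - i) a b := by
  have := i.neZero
  simp [blockCirculant, Matrix.sum_apply, cyclicShift_pow_apply, ← eq_sub_iff_add_eq']

lemma blockCirculant_block_mul_exchMatrix {n p m : ℕ} [NeZero n]
    {r : Fin n → Matrix (Fin p) (Fin m) ℝ}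
    (hcs : blockCirculant r * (exchMatrix n ⊗ₖ exchMatrix m) =
      (exchMatrix n ⊗ₖ exchMatrix p) * blockCirculant r) (k : Fin n) :
    r k * exchMatrix m = exchMatrix p * r (-k) := by
  ext a b
  have h := congr_fun₂ hcs (0, a) (k.rev, b)
  rw [mul_kronecker_exchMatrix, kronecker_exchMatrix_mul] at h
  simp only [submatrix_apply, id, Prod.map, blockCirculant_apply, Fin.rev_rev, sub_zero,
    Fin.rev_sub_rev, zero_sub] at h
  simpa only [mul_exchMatrix, exchMatrix_mul, submatrix_apply, id] using h

theorem blocks_r0_rhalf_centrosymmetric_general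
    (S N_B N_C : ℕ) [NeZero S] (hSeven : Even S)
    (r : Fin S → Matrix (Fin N_B) (Fin N_C) ℝ)
    (R : Matrix (Fin S × Fin N_B) (Fin S × Fin N_C) ℝ)
    (hR : R = ∑ k : Fin S, (cyclicShift S ^ (k : ℕ)) ⊗ₖ r k)
    (hcs : R * (exchMatrix S ⊗ₖ exchMatrix N_C) = (exchMatrix S ⊗ₖ exchMatrix N_B) * R) :
    r 0 * exchMatrix N_C = exchMatrix N_B * r 0 ∧
      r ((S / 2 : ℕ) : Fin S) * exchMatrix N_C = exchMatrix N_B * r ((S / 2 : ℕ) : Fin S) := by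
  subst hR
  have hblock := blockCirculant_block_mul_exchMatrix hcs
  refine ⟨by simpa using hblock 0, ?_⟩
  simpa only [Fin.neg_natCast_half hSeven] using hblock ((S / 2 : ℕ) : Fin S)

/-- If `R` is simultaneously block-circulant of order `S` (with blocks `r_k`, i.e.
`R = Σ_k Ω_S^k ⊗ r_k`) and centrosymmetric (`R·J_{S·N_C} = J_{S·N_B}·R`, where the exchange
matrix on the block index set is `J_S ⊗ J_{N_B}`), then the blocks `r_0` and `r_{S/2}` are
themselves centrosymmetric. -/
theorem blocks_r0_rhalf_centrosymmetric
    (S N_B N_C : ℕ) [NeZero S] (hSeven : Even S)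
    (hNB : 0 < N_B) (hNC : 0 < N_C) (hNBeven : Even N_B) (hNCeven : Even N_C)
    (r : Fin S → Matrix (Fin N_B) (Fin N_C) ℝ)
    (R : Matrix (Fin S × Fin N_B) (Fin S × Fin N_C) ℝ)
    (hR : R = ∑ k : Fin S, (cyclicShift S ^ (k : ℕ)) ⊗ₖ r k)
    (hcs : R * (exchMatrix S ⊗ₖ exchMatrix N_C) = (exchMatrix S ⊗ₖ exchMatrix N_B) * R) :
    r 0 * exchMatrix N_C = exchMatrix N_B * r 0 ∧
      r ((S / 2 : ℕ) : Fin S) * exchMatrix N_C = exchMatrix N_B * r ((S / 2 : ℕ) : Fin S) :=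
  blocks_r0_rhalf_centrosymmetric_general S N_B N_C hSeven r R hR hcs
end

section
/- Let S be an even positive integer and N_B, N_C positive integers such that S·N_B and S·N_C are divisible by 4. Suppose R ∈ ℝ^{(S·N_B)×(S·N_C)} is simultaneously block-circulant of order S with N_B×N_C blocks and centrosymmetric, and partition R into four equal blocks R = [[R₁, R₂],[J_{S·N_B/2}·R₂·J_{S·N_C/2}, J_{S·N_B/2}·R₁·J_{S·N_C/2}]] with R₁, R₂ ∈ ℝ^{(S·N_B/2)×(S·N_C/2)}. Then R₁ and R₂ are themselves centrosymmetric, and consequently the two diagonal blocks R₁ − R₂·J_{S·N_C/2} and R₁ + R₂·J_{S·N_C/2} of the centrosymmetric decomposition T_{S·N_B/2}ᵀ·R·T_{S·N_C/2} are centrosymmetric matrices in ℝ^{(S·N_B/2)×(S·N_C/2)}. -/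
open Matrix Kronecker

lemma cyclicShift_pow (n : ℕ) (hn : 0 < n) (t : ℕ) (k l : Fin n) :
    (cyclicShift n ^ t) k l = if (l : ℕ) = ((k : ℕ) + t) % n then 1 else 0 := by
  induction t generalizing l with
  | zero =>
    simp only [pow_zero, Matrix.one_apply, Nat.add_zero, Nat.mod_eq_of_lt k.isLt]
    congr 1
    simp [eq_comm, Fin.ext_iff]
  | succ t ih =>
    rw [pow_succ, Matrix.mul_apply]
    rw [Fintype.sum_eq_single (⟨((k : ℕ) + t) % n, Nat.mod_lt _ hn⟩ : Fin n)]
    · rw [ih, if_pos rfl, one_mul]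
      simp only [cyclicShift, Matrix.of_apply]
      have h : (((k : ℕ) + t) % n + 1) % n = ((k : ℕ) + (t + 1)) % n := by
        rw [Nat.mod_add_mod, Nat.add_assoc]
      rw [h]
    · intro m hm
      rw [ih, if_neg, zero_mul]
      intro h
      exact hm (Fin.ext h)

lemma shift_index {S : ℕ} (hS : 0 < S) {k t l : ℕ} (hk : k < S) (ht : t < S) (hl : l < S) :
    (k + t) % S = l ↔ t = (l + S - k) % S := by
  constructor
  · intro h
    rcases lt_or_ge (k + t) S with h1 | h1
    · rw [Nat.mod_eq_of_lt h1] at h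
      have h2 : l + S - k = t + S := by omega
      rw [h2, Nat.add_mod_right, Nat.mod_eq_of_lt ht]
    · have h2 : (k + t) % S = k + t - S := by
        rw [Nat.mod_eq_sub_mod h1, Nat.mod_eq_of_lt (by omega)]
      rw [h2] at h
      have h3 : l + S - k = t := by omega
      rw [h3, Nat.mod_eq_of_lt ht]
  · intro h
    rcases le_or_gt k l with h1 | h1
    · have h2 : l + S - k = (l - k) + S := by omega
      rw [h2, Nat.add_mod_right, Nat.mod_eq_of_lt (by omega)] at h
      subst h
      rw [Nat.mod_eq_of_lt (by omega)]
      omega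
    · have h2 : l + S - k < S := by omega
      rw [Nat.mod_eq_of_lt h2] at h
      subst h
      have h3 : k + (l + S - k) = l + S := by omega
      rw [h3, Nat.add_mod_right, Nat.mod_eq_of_lt hl]

lemma mul_kron_exch {m n : ℕ} (hm : 0 < m) (hn : 0 < n) {I : Type*} [Fintype I]
    [DecidableEq I] (A : Matrix I (Fin m × Fin n) ℝ) (x : I) (l : Fin m) (j : Fin n) :
    (A * (exchMatrix m ⊗ₖ exchMatrix n)) x (l, j) =
      A x (⟨m - 1 - l, by omega⟩, ⟨n - 1 - j, by omega⟩) := by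
  rw [Matrix.mul_apply]
  rw [Fintype.sum_eq_single ((⟨m - 1 - (l : ℕ), by omega⟩, ⟨n - 1 - (j : ℕ), by omega⟩) :
      Fin m × Fin n)]
  · simp only [Matrix.kroneckerMap_apply, exchMatrix, Matrix.of_apply]
    have h1 : m - 1 - (l : ℕ) + (l : ℕ) = m - 1 := by have := l.isLt; omega
    have h2 : n - 1 - (j : ℕ) + (j : ℕ) = n - 1 := by have := j.isLt; omega
    rw [if_pos h1, if_pos h2]
    ring
  · rintro ⟨p, q⟩ hpq
    simp only [Matrix.kroneckerMap_apply, exchMatrix, Matrix.of_apply]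
    by_cases h1 : (p : ℕ) + (l : ℕ) = m - 1
    · by_cases h2 : (q : ℕ) + (j : ℕ) = n - 1
      · exfalso
        apply hpq
        have := p.isLt; have := q.isLt; have := l.isLt; have := j.isLt
        refine Prod.ext (Fin.ext ?_) (Fin.ext ?_) <;> simp <;> omega
      · rw [if_neg h2]; ring
    · rw [if_neg h1]; ring

lemma kron_exch_mul {m n : ℕ} (hm : 0 < m) (hn : 0 < n) {I : Type*} [Fintype I]
    [DecidableEq I] (A : Matrix (Fin m × Fin n) I ℝ) (x : I) (k : Fin m) (i : Fin n) :
    ((exchMatrix m ⊗ₖ exchMatrix n) * A) (k, i) x =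
      A (⟨m - 1 - k, by omega⟩, ⟨n - 1 - i, by omega⟩) x := by
  rw [Matrix.mul_apply]
  rw [Fintype.sum_eq_single ((⟨m - 1 - (k : ℕ), by omega⟩, ⟨n - 1 - (i : ℕ), by omega⟩) :
      Fin m × Fin n)]
  · simp only [Matrix.kroneckerMap_apply, exchMatrix, Matrix.of_apply]
    have h1 : (k : ℕ) + (m - 1 - (k : ℕ)) = m - 1 := by have := k.isLt; omega
    have h2 : (i : ℕ) + (n - 1 - (i : ℕ)) = n - 1 := by have := i.isLt; omega
    rw [if_pos h1, if_pos h2]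
    ring
  · rintro ⟨p, q⟩ hpq
    simp only [Matrix.kroneckerMap_apply, exchMatrix, Matrix.of_apply]
    by_cases h1 : (k : ℕ) + (p : ℕ) = m - 1
    · by_cases h2 : (i : ℕ) + (q : ℕ) = n - 1
      · exfalso
        apply hpq
        have := p.isLt; have := q.isLt; have := k.isLt; have := i.isLt
        refine Prod.ext (Fin.ext ?_) (Fin.ext ?_) <;> simp <;> omega
      · rw [if_neg h2]; ring
    · rw [if_neg h1]; ring

/-- **Decomposition of the centrosymmetric decomposition.** Let `R` be simultaneously
block-circulant of order `S` and centrosymmetric, and let `R₁` (top-left) and `R₂`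
(top-right) be the top-half blocks of the partition of `R` into four equal blocks (rows and
columns with block index `< S/2` form the top/left halves). Then `R₁` and `R₂` are
themselves centrosymmetric, and consequently the two diagonal blocks `R₁ − R₂·J` and
`R₁ + R₂·J` of the centrosymmetric decomposition `Tᵀ·R·T` are centrosymmetric as well
(the exchange matrix of size `S·N_C/2` on the product index set is `J_{S/2} ⊗ J_{N_C}`). -/
theorem centro_decomposition_blocks_centrosymmetric
    (S N_B N_C : ℕ) (hS : 0 < S) (hSeven : Even S) (hNB : 0 < N_B) (hNC : 0 < N_C)
    (h4B : 4 ∣ S * N_B) (h4C : 4 ∣ S * N_C)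
    (r : Fin S → Matrix (Fin N_B) (Fin N_C) ℝ)
    (R : Matrix (Fin S × Fin N_B) (Fin S × Fin N_C) ℝ)
    (hR : R = ∑ k : Fin S, (cyclicShift S ^ (k : ℕ)) ⊗ₖ r k)
    (hcs : R * (exchMatrix S ⊗ₖ exchMatrix N_C) = (exchMatrix S ⊗ₖ exchMatrix N_B) * R)
    (R₁ R₂ : Matrix (Fin (S / 2) × Fin N_B) (Fin (S / 2) × Fin N_C) ℝ)
    (hR₁ : ∀ (k l : Fin (S / 2)) (i : Fin N_B) (j : Fin N_C),
      R₁ (k, i) (l, j) =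
        R (⟨(k : ℕ), by have := k.isLt; omega⟩, i) (⟨(l : ℕ), by have := l.isLt; omega⟩, j))
    (hR₂ : ∀ (k l : Fin (S / 2)) (i : Fin N_B) (j : Fin N_C),
      R₂ (k, i) (l, j) =
        R (⟨(k : ℕ), by have := k.isLt; omega⟩, i)
          (⟨S / 2 + (l : ℕ), by have := l.isLt; omega⟩, j)) :
    R₁ * (exchMatrix (S / 2) ⊗ₖ exchMatrix N_C) =
      (exchMatrix (S / 2) ⊗ₖ exchMatrix N_B) * R₁ ∧
    R₂ * (exchMatrix (S / 2) ⊗ₖ exchMatrix N_C) =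
      (exchMatrix (S / 2) ⊗ₖ exchMatrix N_B) * R₂ ∧
    (R₁ - R₂ * (exchMatrix (S / 2) ⊗ₖ exchMatrix N_C)) *
        (exchMatrix (S / 2) ⊗ₖ exchMatrix N_C) =
      (exchMatrix (S / 2) ⊗ₖ exchMatrix N_B) *
        (R₁ - R₂ * (exchMatrix (S / 2) ⊗ₖ exchMatrix N_C)) ∧
    (R₁ + R₂ * (exchMatrix (S / 2) ⊗ₖ exchMatrix N_C)) *
        (exchMatrix (S / 2) ⊗ₖ exchMatrix N_C) =
      (exchMatrix (S / 2) ⊗ₖ exchMatrix N_B) *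
        (R₁ + R₂ * (exchMatrix (S / 2) ⊗ₖ exchMatrix N_C)) := by
  classical
  have h2pos : 0 < S / 2 := by obtain ⟨c, hc⟩ := hSeven; omega
  have hS2 : S / 2 + S / 2 = S := by obtain ⟨c, hc⟩ := hSeven; omega
  -- entrywise formula for R from block-circulant structure
  have R_entry : ∀ (k l : Fin S) (i : Fin N_B) (j : Fin N_C),
      R (k, i) (l, j) = r ⟨((l : ℕ) + S - (k : ℕ)) % S, Nat.mod_lt _ hS⟩ i j := by
    intro k l i j
    rw [hR]
    simp only [Matrix.sum_apply, Matrix.kroneckerMap_apply, cyclicShift_pow S hS]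
    rw [Fintype.sum_eq_single (⟨((l : ℕ) + S - (k : ℕ)) % S, Nat.mod_lt _ hS⟩ : Fin S)]
    · rw [if_pos, one_mul]
      exact ((shift_index hS k.isLt (Nat.mod_lt _ hS) l.isLt).mpr rfl).symm
    · intro t htne
      rw [if_neg, zero_mul]
      intro h
      exact htne (Fin.ext ((shift_index hS k.isLt t.isLt l.isLt).mp h.symm))
  -- shift invariance of R
  have Rinv : ∀ (a b a' b' : Fin S),
      ((b : ℕ) + S - (a : ℕ)) % S = ((b' : ℕ) + S - (a' : ℕ)) % S →
      ∀ (i : Fin N_B) (j : Fin N_C), R (a, i) (b, j) = R (a', i) (b', j) := by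
    intro a b a' b' h i j
    rw [R_entry, R_entry]
    congr 1
    exact Fin.ext h
  -- entrywise centrosymmetry of R
  have hcs' : ∀ (k : Fin S) (i : Fin N_B) (l : Fin S) (j : Fin N_C),
      R (k, i) (⟨S - 1 - (l : ℕ), by omega⟩, ⟨N_C - 1 - (j : ℕ), by have := j.isLt; omega⟩) =
      R (⟨S - 1 - (k : ℕ), by omega⟩, ⟨N_B - 1 - (i : ℕ), by have := i.isLt; omega⟩) (l, j) := by
    intro k i l j
    have h := congrFun (congrFun hcs (k, i)) (l, j)
    rwa [mul_kron_exch hS hNC, kron_exch_mul hS hNB] at h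
  have key1 : R₁ * (exchMatrix (S / 2) ⊗ₖ exchMatrix N_C) =
      (exchMatrix (S / 2) ⊗ₖ exchMatrix N_B) * R₁ := by
    ext ⟨k, i⟩ ⟨l, j⟩
    have hk := k.isLt; have hl := l.isLt; have hi := i.isLt; have hj := j.isLt
    rw [mul_kron_exch h2pos hNC, kron_exch_mul h2pos hNB, hR₁, hR₁]
    show R (⟨(k : ℕ), by omega⟩, i)
        (⟨S / 2 - 1 - (l : ℕ), by omega⟩, ⟨N_C - 1 - (j : ℕ), by omega⟩) =
      R (⟨S / 2 - 1 - (k : ℕ), by omega⟩, ⟨N_B - 1 - (i : ℕ), by omega⟩)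
        (⟨(l : ℕ), by omega⟩, j)
    calc R (⟨(k : ℕ), by omega⟩, i)
          (⟨S / 2 - 1 - (l : ℕ), by omega⟩, ⟨N_C - 1 - (j : ℕ), by omega⟩)
        = R (⟨(k : ℕ) + S / 2, by omega⟩, i)
            (⟨S - 1 - (l : ℕ), by omega⟩, ⟨N_C - 1 - (j : ℕ), by omega⟩) := by
          apply Rinv
          show ((S / 2 - 1 - (l : ℕ)) + S - (k : ℕ)) % S
              = ((S - 1 - (l : ℕ)) + S - ((k : ℕ) + S / 2)) % S
          congr 1
          omega
      _ = R (⟨S - 1 - ((k : ℕ) + S / 2), by omega⟩, ⟨N_B - 1 - (i : ℕ), by omega⟩)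
            (⟨(l : ℕ), by omega⟩, j) :=
          hcs' ⟨(k : ℕ) + S / 2, by omega⟩ i ⟨(l : ℕ), by omega⟩ j
      _ = R (⟨S / 2 - 1 - (k : ℕ), by omega⟩, ⟨N_B - 1 - (i : ℕ), by omega⟩)
            (⟨(l : ℕ), by omega⟩, j) := by
          apply Rinv
          show ((l : ℕ) + S - (S - 1 - ((k : ℕ) + S / 2))) % S
              = ((l : ℕ) + S - (S / 2 - 1 - (k : ℕ))) % S
          congr 1
          omega
  have key2 : R₂ * (exchMatrix (S / 2) ⊗ₖ exchMatrix N_C) =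
      (exchMatrix (S / 2) ⊗ₖ exchMatrix N_B) * R₂ := by
    ext ⟨k, i⟩ ⟨l, j⟩
    have hk := k.isLt; have hl := l.isLt; have hi := i.isLt; have hj := j.isLt
    rw [mul_kron_exch h2pos hNC, kron_exch_mul h2pos hNB, hR₂, hR₂]
    show R (⟨(k : ℕ), by omega⟩, i)
        (⟨S / 2 + (S / 2 - 1 - (l : ℕ)), by omega⟩, ⟨N_C - 1 - (j : ℕ), by omega⟩) =
      R (⟨S / 2 - 1 - (k : ℕ), by omega⟩, ⟨N_B - 1 - (i : ℕ), by omega⟩)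
        (⟨S / 2 + (l : ℕ), by omega⟩, j)
    calc R (⟨(k : ℕ), by omega⟩, i)
          (⟨S / 2 + (S / 2 - 1 - (l : ℕ)), by omega⟩, ⟨N_C - 1 - (j : ℕ), by omega⟩)
        = R (⟨(k : ℕ), by omega⟩, i)
            (⟨S - 1 - (l : ℕ), by omega⟩, ⟨N_C - 1 - (j : ℕ), by omega⟩) := by
          have e : S / 2 + (S / 2 - 1 - (l : ℕ)) = S - 1 - (l : ℕ) := by omega
          exact congrArg (R _) (Prod.ext (Fin.ext e) rfl)
      _ = R (⟨S - 1 - (k : ℕ), by omega⟩, ⟨N_B - 1 - (i : ℕ), by omega⟩)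
            (⟨(l : ℕ), by omega⟩, j) :=
          hcs' ⟨(k : ℕ), by omega⟩ i ⟨(l : ℕ), by omega⟩ j
      _ = R (⟨S / 2 - 1 - (k : ℕ), by omega⟩, ⟨N_B - 1 - (i : ℕ), by omega⟩)
            (⟨S / 2 + (l : ℕ), by omega⟩, j) := by
          apply Rinv
          show ((l : ℕ) + S - (S - 1 - (k : ℕ))) % S
              = ((S / 2 + (l : ℕ)) + S - (S / 2 - 1 - (k : ℕ))) % S
          have e : (S / 2 + (l : ℕ)) + S - (S / 2 - 1 - (k : ℕ))
              = ((l : ℕ) + S - (S - 1 - (k : ℕ))) + S := by omega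
          rw [e, Nat.add_mod_right]
  refine ⟨key1, key2, ?_, ?_⟩
  · rw [Matrix.sub_mul, Matrix.mul_sub, ← key1, ← Matrix.mul_assoc, ← key2]
  · rw [Matrix.add_mul, Matrix.mul_add, ← key1, ← Matrix.mul_assoc, ← key2]
end

section
/- Let q, t be positive integers, let R ∈ ℝ^{2q×2t} be centrosymmetric (R·J_{2t} = J_{2q}·R), and let μ > 0. Then the matrix RᵀR + μ·I_{2t} is invertible and the controller gain matrix K = (RᵀR + μ·I_{2t})⁻¹·Rᵀ ∈ ℝ^{2t×2q} is centrosymmetric, i.e. K·J_{2q} = J_{2t}·K. -/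
open Matrix

/-!
Centrosymmetry, `A J = J A`, is stable under transposition (the exchange matrices are
symmetric), products, linear combinations and, for square matrices, inversion, since a matrix
commuting with `J` has an inverse commuting with `J`. The gain `K = (RᵀR + μI)⁻¹ Rᵀ` is assembled from `R` by
exactly these operations, and `RᵀR + μI` is positive definite, hence invertible.
-/

lemma exchMatrix_transpose (n : ℕ) : (exchMatrix n)ᵀ = exchMatrix n := by
  ext i j
  simp [exchMatrix, add_comm]

lemma Matrix.commute_nonsing_inv_left {n α : Type*} [Fintype n] [DecidableEq n] [CommRing α]
    {A B : Matrix n n α} (h : Commute A B) : Commute A⁻¹ B := by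
  rw [nonsing_inv_eq_ringInverse]
  by_cases hA : IsUnit A
  · obtain ⟨u, rfl⟩ := hA
    rw [Ring.inverse_unit]
    exact h.units_inv_left
  · rw [Ring.inverse_non_unit _ hA]
    exact Commute.zero_left B

lemma Matrix.posDef_transpose_mul_self_add_smul_one {m n : Type*} [Fintype m] [Fintype n]
    [DecidableEq n] (R : Matrix m n ℝ) {μ : ℝ} (hμ : 0 < μ) :
    (Rᵀ * R + μ • (1 : Matrix n n ℝ)).PosDef := by
  have hRR : (Rᵀ * R).PosSemidef := by
    rw [← conjTranspose_eq_transpose_of_trivial]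
    exact posSemidef_conjTranspose_mul_self R
  exact PosDef.posSemidef_add hRR (PosDef.one.smul hμ)

def IsCentrosymm {m n : ℕ} (A : Matrix (Fin m) (Fin n) ℝ) : Prop :=
  A * exchMatrix n = exchMatrix m * A

namespace IsCentrosymm

variable {k m n : ℕ}

lemma one : IsCentrosymm (1 : Matrix (Fin n) (Fin n) ℝ) := by
  rw [IsCentrosymm, Matrix.one_mul, Matrix.mul_one]

lemma transpose {A : Matrix (Fin m) (Fin n) ℝ} (hA : IsCentrosymm A) : IsCentrosymm Aᵀ := by
  have h := congrArg (·ᵀ) hA.symm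
  rwa [transpose_mul, transpose_mul, exchMatrix_transpose, exchMatrix_transpose] at h

lemma mul {A : Matrix (Fin k) (Fin m) ℝ} {B : Matrix (Fin m) (Fin n) ℝ}
    (hA : IsCentrosymm A) (hB : IsCentrosymm B) : IsCentrosymm (A * B) := by
  rw [IsCentrosymm, Matrix.mul_assoc, hB, ← Matrix.mul_assoc, hA, Matrix.mul_assoc]

lemma add {A B : Matrix (Fin m) (Fin n) ℝ} (hA : IsCentrosymm A) (hB : IsCentrosymm B) :
    IsCentrosymm (A + B) := by
  rw [IsCentrosymm, Matrix.add_mul, Matrix.mul_add, hA, hB]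

lemma smul {A : Matrix (Fin m) (Fin n) ℝ} (hA : IsCentrosymm A) (c : ℝ) :
    IsCentrosymm (c • A) := by
  rw [IsCentrosymm, Matrix.smul_mul, Matrix.mul_smul, hA]

lemma inv {A : Matrix (Fin n) (Fin n) ℝ} (hA : IsCentrosymm A) : IsCentrosymm A⁻¹ :=
  (Matrix.commute_nonsing_inv_left hA).eq

end IsCentrosymm

theorem gain_matrix_centrosymmetric_general
    (q t : ℕ)
    (R : Matrix (Fin (2 * q)) (Fin (2 * t)) ℝ)
    (hR : R * exchMatrix (2 * t) = exchMatrix (2 * q) * R)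
    (μ : ℝ) (hμ : 0 < μ) :
    IsUnit (Rᵀ * R + μ • (1 : Matrix (Fin (2 * t)) (Fin (2 * t)) ℝ)) ∧
    (Rᵀ * R + μ • (1 : Matrix (Fin (2 * t)) (Fin (2 * t)) ℝ))⁻¹ * Rᵀ * exchMatrix (2 * q) =
      exchMatrix (2 * t) *
        ((Rᵀ * R + μ • (1 : Matrix (Fin (2 * t)) (Fin (2 * t)) ℝ))⁻¹ * Rᵀ) := by
  have hR' : IsCentrosymm R := hR
  have hM : IsCentrosymm (Rᵀ * R + μ • (1 : Matrix (Fin (2 * t)) (Fin (2 * t)) ℝ)) :=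
    (hR'.transpose.mul hR').add (IsCentrosymm.one.smul μ)
  exact ⟨(posDef_transpose_mul_self_add_smul_one R hμ).isUnit, hM.inv.mul hR'.transpose⟩

/-- **The controller gain matrix of a centrosymmetric orbit response matrix is
centrosymmetric.** If `R ∈ ℝ^{2q×2t}` is centrosymmetric and `μ > 0`, then `RᵀR + μ·I` is
invertible and `K = (RᵀR + μ·I)⁻¹·Rᵀ` satisfies `K·J_{2q} = J_{2t}·K`. -/
theorem gain_matrix_centrosymmetric
    (q t : ℕ) (hq : 0 < q) (ht : 0 < t)
    (R : Matrix (Fin (2 * q)) (Fin (2 * t)) ℝ)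
    (hR : R * exchMatrix (2 * t) = exchMatrix (2 * q) * R)
    (μ : ℝ) (hμ : 0 < μ) :
    IsUnit (Rᵀ * R + μ • (1 : Matrix (Fin (2 * t)) (Fin (2 * t)) ℝ)) ∧
    (Rᵀ * R + μ • (1 : Matrix (Fin (2 * t)) (Fin (2 * t)) ℝ))⁻¹ * Rᵀ * exchMatrix (2 * q) =
      exchMatrix (2 * t) *
        ((Rᵀ * R + μ • (1 : Matrix (Fin (2 * t)) (Fin (2 * t)) ℝ))⁻¹ * Rᵀ) :=
  gain_matrix_centrosymmetric_general q t R hR μ hμ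
end
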